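/- Let X₁, X₂ be real M×T matrices, and suppose X₁ = ΦΣΨᵀ where Φ is M×K with orthonormal columns (ΦᵀΦ = I_K), Ψ is T×K with orthonormal columns (ΨᵀΨ = I_K), and Σ is a K×K invertible diagonal matrix (a compact SVD of X₁). Let A := X₂ΨΣ⁻¹Φᵀ and à := ΦᵀX₂ΨΣ⁻¹. If v̂ ∈ ℝ^K is nonzero and à v̂ = λ v̂ with λ ≠ 0, then the vector v := λ⁻¹ X₂ΨΣ⁻¹ v̂ is nonzero and satisfies A v = λ v. -/
import Mathlib


open Matrix

/-- Exact DMD reconstruction: given a compact SVD `X₁ = Φ S Ψᵀ` with `Φ, Ψ`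
having orthonormal columns and `S` invertible diagonal, every eigenvector `vh` of
the compressed matrix `Ã = Φᵀ X₂ Ψ S⁻¹` with nonzero eigenvalue `l` yields a
nonzero eigenvector `v = l⁻¹ X₂ Ψ S⁻¹ vh` of `A = X₂ Ψ S⁻¹ Φᵀ` for `l`. -/
theorem dmd_mode_reconstruction {M T K : ℕ}
    (X₁ X₂ : Matrix (Fin M) (Fin T) ℝ)
    (Φ : Matrix (Fin M) (Fin K) ℝ) (Ψ : Matrix (Fin T) (Fin K) ℝ)
    (S : Matrix (Fin K) (Fin K) ℝ)
    (hΦ : Φᵀ * Φ = 1) (hΨ : Ψᵀ * Ψ = 1)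
    (hSdiag : S.IsDiag) (hS : IsUnit S)
    (hX₁ : X₁ = Φ * S * Ψᵀ)
    (vh : Fin K → ℝ) (hvh : vh ≠ 0) (l : ℝ) (hl : l ≠ 0)
    (heig : (Φᵀ * X₂ * Ψ * S⁻¹).mulVec vh = l • vh) :
    l⁻¹ • (X₂ * Ψ * S⁻¹).mulVec vh ≠ 0 ∧
    (X₂ * Ψ * S⁻¹ * Φᵀ).mulVec (l⁻¹ • (X₂ * Ψ * S⁻¹).mulVec vh)
      = l • (l⁻¹ • (X₂ * Ψ * S⁻¹).mulVec vh) := by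
  set w := (X₂ * Ψ * S⁻¹).mulVec vh with hw
  have hΦw : Φᵀ.mulVec w = l • vh := by
    rw [hw, ← mulVec_mulVec, ← heig]
    simp [← mulVec_mulVec, Matrix.mul_assoc]
  have hwne : w ≠ 0 := by
    intro h
    apply hvh
    have := hΦw
    rw [h, mulVec_zero] at this
    have := this.symm
    exact (smul_eq_zero.mp this).resolve_left hl
  constructor
  · simp [smul_ne_zero_iff, hl, inv_ne_zero, hwne]
  · rw [mulVec_smul, ← mulVec_mulVec, hΦw, ← mulVec_mulVec]
    simp only [mulVec_smul]
    rw [smul_smul, smul_smul, inv_mul_cancel₀ hl, mul_inv_cancel₀ hl, one_smul, one_smul]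
    rw [mulVec_mulVec, hw]
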